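/- Let (X_i) be IID with E[(X⁺)^s] < ∞ for some s > 1, and N a positive-integer-valued random variable independent of (X_i) with E[N^s] < ∞. Then E[((S_N)⁺)^s] ≤ E[(X⁺)^s]·E[N^s]. -/

import Mathlib

/-!
For a fixed number of terms, `(S_n)⁺ ≤ ∑ X_k⁺` and Minkowski's inequality in `L^s` give
`‖(S_n)⁺‖_s ≤ n ‖X⁺‖_s`, i.e. `E[((S_n)⁺)^s] ≤ n^s E[(X⁺)^s]`. Since `N` is independent of the
sequence, the joint law of `(N, (X_i))` is a product measure, so by Tonelli `E[((S_N)⁺)^s]` is the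
`N`-average of the fixed-`n` moments, which is at most `E[N^s] E[(X⁺)^s]`.
-/

open MeasureTheory ProbabilityTheory
open scoped ENNReal

section

variable {Ω : Type*} [MeasurableSpace Ω] {μ : Measure Ω}

theorem lintegral_comp_indepFun_eq_lintegral_lintegral [IsFiniteMeasure μ]
    {β : Type*} [MeasurableSpace β] {N : Ω → ℕ} {Y : Ω → β}
    (hN : Measurable N) (hY : Measurable Y) (hNY : IndepFun N Y μ)
    {F : ℕ → β → ℝ≥0∞} (hF : ∀ n, Measurable (F n)) :
    ∫⁻ ω, F (N ω) (Y ω) ∂μ = ∫⁻ ω, ∫⁻ ω', F (N ω) (Y ω') ∂μ ∂μ := by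
  have hF' : Measurable fun p : ℕ × β => F p.1 p.2 :=
    measurable_from_prod_countable_right hF
  have hmap := (indepFun_iff_map_prod_eq_prod_map_map hN.aemeasurable hY.aemeasurable).1 hNY
  calc ∫⁻ ω, F (N ω) (Y ω) ∂μ
      = ∫⁻ p, F p.1 p.2 ∂(μ.map fun ω => (N ω, Y ω)) :=
        (lintegral_map hF' (hN.prodMk hY)).symm
    _ = ∫⁻ n, ∫⁻ y, F n y ∂(μ.map Y) ∂(μ.map N) := by
        rw [hmap, lintegral_prod _ hF'.aemeasurable]
    _ = ∫⁻ ω, ∫⁻ ω', F (N ω) (Y ω') ∂μ ∂μ := by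
        rw [lintegral_map (measurable_of_countable _) hN]
        simp_rw [lintegral_map (hF _) hY]

theorem lintegral_ofReal_rpow_eq_eLpNorm_rpow {f : Ω → ℝ} (hf : 0 ≤ f) {s : ℝ} (hs : 0 < s) :
    ∫⁻ ω, ENNReal.ofReal (f ω ^ s) ∂μ = eLpNorm f (ENNReal.ofReal s) μ ^ s := by
  rw [eLpNorm_eq_eLpNorm' (by simpa using hs) ENNReal.ofReal_ne_top,
    ENNReal.toReal_ofReal hs.le, ← lintegral_rpow_enorm_eq_rpow_eLpNorm' hs]
  refine lintegral_congr fun ω => ?_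
  rw [Real.enorm_eq_ofReal (hf ω), ENNReal.ofReal_rpow_of_nonneg (hf ω) hs.le]

theorem lintegral_rpow_sum_le_of_identDistrib {Y : ℕ → Ω → ℝ} (hY : ∀ k, 0 ≤ Y k)
    (hident : ∀ k, IdentDistrib (Y k) (Y 0) μ μ) {s : ℝ} (hs : 1 ≤ s) (n : ℕ) :
    ∫⁻ ω, ENNReal.ofReal ((∑ k ∈ Finset.range n, Y k ω) ^ s) ∂μ
      ≤ (n : ℝ≥0∞) ^ s * ∫⁻ ω, ENNReal.ofReal (Y 0 ω ^ s) ∂μ := by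
  have hs0 : 0 < s := one_pos.trans_le hs
  have hsum : (fun ω => ∑ k ∈ Finset.range n, Y k ω) = ∑ k ∈ Finset.range n, Y k := by
    ext ω; simp
  have minkowski : eLpNorm (∑ k ∈ Finset.range n, Y k) (ENNReal.ofReal s) μ
      ≤ n * eLpNorm (Y 0) (ENNReal.ofReal s) μ :=
    calc eLpNorm (∑ k ∈ Finset.range n, Y k) (ENNReal.ofReal s) μ
        ≤ ∑ k ∈ Finset.range n, eLpNorm (Y k) (ENNReal.ofReal s) μ :=
          eLpNorm_sum_le (fun k _ => (hident k).aemeasurable_fst.aestronglyMeasurable)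
            (by simpa using hs)
      _ = n * eLpNorm (Y 0) (ENNReal.ofReal s) μ := by
          simp [fun k => (hident k).eLpNorm_eq (ENNReal.ofReal s)]
  rw [lintegral_ofReal_rpow_eq_eLpNorm_rpow (fun ω => Finset.sum_nonneg fun k _ => hY k ω) hs0,
    lintegral_ofReal_rpow_eq_eLpNorm_rpow (hY 0) hs0, hsum, ← ENNReal.mul_rpow_of_nonneg _ _ hs0.le]
  exact ENNReal.rpow_le_rpow minkowski hs0.le

theorem lintegral_rpow_posPart_sum_le_of_identDistrib {X : ℕ → Ω → ℝ}
    (hident : ∀ k, IdentDistrib (X k) (X 0) μ μ) {s : ℝ} (hs : 1 ≤ s) (n : ℕ) :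
    ∫⁻ ω, ENNReal.ofReal ((max (∑ k ∈ Finset.range n, X k ω) 0) ^ s) ∂μ
      ≤ (n : ℝ≥0∞) ^ s * ∫⁻ ω, ENNReal.ofReal ((max (X 0 ω) 0) ^ s) ∂μ := by
  have hpos : ∀ ω, max (∑ k ∈ Finset.range n, X k ω) 0 ≤ ∑ k ∈ Finset.range n, max (X k ω) 0 :=
    fun ω => max_le (Finset.sum_le_sum fun k _ => le_max_left _ _)
      (Finset.sum_nonneg fun k _ => le_max_right _ _)
  calc ∫⁻ ω, ENNReal.ofReal ((max (∑ k ∈ Finset.range n, X k ω) 0) ^ s) ∂μ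
      ≤ ∫⁻ ω, ENNReal.ofReal ((∑ k ∈ Finset.range n, max (X k ω) 0) ^ s) ∂μ :=
        lintegral_mono fun ω => ENNReal.ofReal_le_ofReal <|
          Real.rpow_le_rpow (le_max_right _ _) (hpos ω) (by linarith)
    _ ≤ _ := lintegral_rpow_sum_le_of_identDistrib (Y := fun k ω => max (X k ω) 0)
          (fun k ω => le_max_right _ _)
          (fun k => (hident k).comp (measurable_id.max measurable_const)) hs n

end

theorem stopped_sum_moment_bound_minkowski_general
    {Ω : Type*} [MeasurableSpace Ω] (μ : Measure Ω) [IsProbabilityMeasure μ]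
    (X : ℕ → Ω → ℝ) (hXmeas : ∀ i, Measurable (X i))
    (hXident : ∀ i, IdentDistrib (X i) (X 0) μ μ)
    (N : Ω → ℕ) (hNmeas : Measurable N)
    (hNindep : IndepFun (fun ω i => X i ω) N μ)
    (s : ℝ) (hs : 1 < s)
    (hXs : Integrable (fun ω => (max (X 0 ω) 0) ^ s) μ)
    (hNs : Integrable (fun ω => (N ω : ℝ) ^ s) μ) :
    ∫⁻ ω, ENNReal.ofReal ((max (∑ k ∈ Finset.range (N ω), X k ω) 0) ^ s) ∂μ
      ≤ ENNReal.ofReal (∫ ω, (max (X 0 ω) 0) ^ s ∂μ)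
        * ENNReal.ofReal (∫ ω, (N ω : ℝ) ^ s ∂μ) := by
  have hs0 : 0 ≤ s := by linarith
  rw [ofReal_integral_eq_lintegral_ofReal hXs
      (.of_forall fun ω => Real.rpow_nonneg (le_max_right _ _) s),
    ofReal_integral_eq_lintegral_ofReal hNs
      (.of_forall fun ω => Real.rpow_nonneg (Nat.cast_nonneg _) s)]
  calc ∫⁻ ω, ENNReal.ofReal ((max (∑ k ∈ Finset.range (N ω), X k ω) 0) ^ s) ∂μ
      = ∫⁻ ω, ∫⁻ ω', ENNReal.ofReal ((max (∑ k ∈ Finset.range (N ω), X k ω') 0) ^ s) ∂μ ∂μ :=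
        lintegral_comp_indepFun_eq_lintegral_lintegral (Y := fun ω i => X i ω)
          (F := fun n x => ENNReal.ofReal ((max (∑ k ∈ Finset.range n, x k) 0) ^ s))
          hNmeas (measurable_pi_lambda _ hXmeas) hNindep.symm fun n =>
          (((Finset.measurable_sum _ fun k _ => measurable_pi_apply k).max
            measurable_const).pow_const s).ennreal_ofReal
    _ ≤ ∫⁻ ω, (N ω : ℝ≥0∞) ^ s * ∫⁻ ω', ENNReal.ofReal ((max (X 0 ω') 0) ^ s) ∂μ ∂μ :=
        lintegral_mono fun ω => lintegral_rpow_posPart_sum_le_of_identDistrib hXident hs.le (N ω)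
    _ = _ := by
        rw [lintegral_mul_const (f := fun ω => (N ω : ℝ≥0∞) ^ s) _
          ((measurable_of_countable fun n : ℕ => (n : ℝ≥0∞) ^ s).comp hNmeas), mul_comm]
        simp_rw [← ENNReal.ofReal_natCast, ENNReal.ofReal_rpow_of_nonneg (Nat.cast_nonneg _) hs0]

/-- For an independently stopped random walk with IID increments and `s > 1`,
if `E[(X⁺)^s] < ∞` and `E[N^s] < ∞`, then
`E[((S_N)⁺)^s] ≤ E[(X⁺)^s] · E[N^s]` (Minkowski). -/
theorem stopped_sum_moment_bound_minkowski
    {Ω : Type*} [MeasurableSpace Ω] (μ : Measure Ω) [IsProbabilityMeasure μ]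
    (X : ℕ → Ω → ℝ) (hXmeas : ∀ i, Measurable (X i))
    (hXindep : iIndepFun X μ)
    (hXident : ∀ i, IdentDistrib (X i) (X 0) μ μ)
    (N : Ω → ℕ) (hNmeas : Measurable N) (hNpos : ∀ ω, 1 ≤ N ω)
    (hNindep : IndepFun (fun ω i => X i ω) N μ)
    (s : ℝ) (hs : 1 < s)
    (hXs : Integrable (fun ω => (max (X 0 ω) 0) ^ s) μ)
    (hNs : Integrable (fun ω => (N ω : ℝ) ^ s) μ) :
    ∫⁻ ω, ENNReal.ofReal ((max (∑ k ∈ Finset.range (N ω), X k ω) 0) ^ s) ∂μ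
      ≤ ENNReal.ofReal (∫ ω, (max (X 0 ω) 0) ^ s ∂μ)
        * ENNReal.ofReal (∫ ω, (N ω : ℝ) ^ s ∂μ) :=
  stopped_sum_moment_bound_minkowski_general μ X hXmeas hXident N hNmeas hNindep s hs hXs hNs
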